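/- Fix positive integers m and k with k ≥ m. Then as formal power series (or for |q| < 1), ∑_{h=-∞}^{k-1} ∑_{l=1}^k q^{(m-1)(2k-h-l) + k + l(k-h-1)} / ((q;q)_{k-h-1} (q;q)_{m-1}) · [k-1 choose l-1]_q = (q^{km} / (q^k; q)_∞) · ∑_{l=1}^k q^{-(l-1)(m-1)} (q^m; q)_{l-1} / ((q;q)_{l-1} (q;q)_{k-l}), where [a choose b]_q is the Gaussian binomial coefficient. -/

import Mathlib

open Finset

/-- Finite q-Pochhammer symbol `(a; q)_n = ∏_{j=0}^{n-1} (1 - a q^j)`. -/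
noncomputable def qPoch (a q : ℂ) (n : ℕ) : ℂ := ∏ j ∈ Finset.range n, (1 - a * q ^ j)

/-- Infinite q-Pochhammer symbol `(a; q)_∞ = ∏_{j=0}^{∞} (1 - a q^j)`. -/
noncomputable def qPochInf (a q : ℂ) : ℂ := ∏' j : ℕ, (1 - a * q ^ j)

/-- q-Pochhammer with integer index, 0 when the index is negative. -/
noncomputable def qPochZ (a q : ℂ) (n : ℤ) : ℂ := if 0 ≤ n then qPoch a q n.toNat else 0

/-- Gaussian binomial coefficient `[a choose b]_q`, 0 when `b < 0` or `b > a`. -/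
noncomputable def qBinom (q : ℂ) (a b : ℤ) : ℂ :=
  if 0 ≤ b ∧ b ≤ a then qPoch q q a.toNat / (qPoch q q b.toNat * qPoch q q (a - b).toNat)
  else 0

/-- A partition: a weakly decreasing list of positive integers. -/
def IsPartition (l : List ℕ) : Prop := l.Pairwise (· ≥ ·) ∧ ∀ x ∈ l, 0 < x

/-- A partition into distinct parts: a strictly decreasing list of positive integers. -/
def IsDistinctPartition (l : List ℕ) : Prop := l.Pairwise (· > ·) ∧ ∀ x ∈ l, 0 < x

/-- Conjugate partition value: `λ'_j = #{i : λ_i ≥ j}`. -/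
def partConj (l : List ℕ) (j : ℕ) : ℕ := l.countP (fun x => decide (j ≤ x))

/-- Hook length `h_{i,j}(λ) = λ_i + λ'_j − i − j + 1` (1-indexed). -/
def hookLen (l : List ℕ) (i j : ℕ) : ℤ :=
  (l.getD (i - 1) 0 : ℤ) + (partConj l j : ℤ) - (i : ℤ) - (j : ℤ) + 1

/-- `C(a, 2) = a(a-1)/2`. -/
def c2 (a : ℤ) : ℤ := a * (a - 1) / 2

namespace QAux

variable {q : ℂ}

lemma factor_ne {a : ℂ} (ha : ‖a‖ < 1) (hqle : ‖q‖ ≤ 1) (j : ℕ) : 1 - a * q ^ j ≠ 0 := by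
  intro h
  have h1 : a * q ^ j = 1 := by linear_combination -h
  have : ‖a * q ^ j‖ < 1 := by
    rw [norm_mul, norm_pow]
    calc ‖a‖ * ‖q‖ ^ j ≤ ‖a‖ * 1 := by
          apply mul_le_mul_of_nonneg_left (pow_le_one₀ (norm_nonneg q) hqle) (norm_nonneg a)
      _ < 1 := by simpa using ha
  rw [h1] at this; simp at this

lemma qPoch_ne_zero {a : ℂ} (ha : ‖a‖ < 1) (hqle : ‖q‖ ≤ 1) (n : ℕ) : qPoch a q n ≠ 0 :=
  Finset.prod_ne_zero_iff.2 fun j _ => factor_ne ha hqle j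

lemma prod_one_sub_ge (s : Finset ℕ) (f : ℕ → ℝ) (h0 : ∀ i, 0 ≤ f i) (h1 : ∀ i, f i ≤ 1) :
    1 - ∑ i ∈ s, f i ≤ ∏ i ∈ s, (1 - f i) := by
  induction s using Finset.cons_induction with
  | empty => simp
  | cons a s ha ih =>
    rw [Finset.prod_cons, Finset.sum_cons]
    have hs : (0:ℝ) ≤ ∑ i ∈ s, f i := Finset.sum_nonneg fun i _ => h0 i
    nlinarith [h0 a, h1 a, ih]

/-- uniform positive lower bound on `‖(q;q)_n‖`. -/
lemma exists_lb (hq : ‖q‖ < 1) : ∃ c : ℝ, 0 < c ∧ ∀ n, c ≤ ‖qPoch q q n‖ := by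
  have hq0 : (0:ℝ) ≤ ‖q‖ := norm_nonneg q
  obtain ⟨J, hJ⟩ : ∃ J : ℕ, ‖q‖ ^ J < (1 - ‖q‖) / 2 := by
    rcases eq_or_lt_of_le hq0 with h | h
    · exact ⟨1, by rw [pow_one, ← h]; linarith⟩
    · exact exists_pow_lt_of_lt_one (by linarith) hq
  set g : ℕ → ℝ := fun i => ‖q‖ ^ (i + 1) with hg
  have hg0 : ∀ i, 0 ≤ g i := fun i => pow_nonneg hq0 _
  have hg1 : ∀ i, g i ≤ ‖q‖ := fun i => by
    calc g i = ‖q‖ ^ (i+1) := rfl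
      _ ≤ ‖q‖ ^ 1 := pow_le_pow_of_le_one hq0 hq.le (by omega)
      _ = ‖q‖ := pow_one _
  have hg1' : ∀ i, g i ≤ 1 := fun i => le_trans (hg1 i) hq.le
  have hP : ∀ n, (0:ℝ) < ∏ i ∈ Finset.range n, (1 - g i) := by
    intro n
    exact Finset.prod_pos fun i _ => by linarith [hg1 i]
  refine ⟨(∏ i ∈ Finset.range J, (1 - g i)) / 2, div_pos (hP J) two_pos, fun n => ?_⟩
  have key : (∏ i ∈ Finset.range J, (1 - g i)) / 2 ≤ ∏ i ∈ Finset.range n, (1 - g i) := by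
    rcases le_or_gt n J with h | h
    · have hsub : Finset.range n ⊆ Finset.range J := Finset.range_subset_range.2 h
      have h2 : ∏ i ∈ Finset.range J, (1 - g i) ≤ ∏ i ∈ Finset.range n, (1 - g i) := by
        rw [← Finset.prod_sdiff hsub]
        have h1 : ∏ i ∈ Finset.range J \ Finset.range n, (1 - g i) ≤ 1 :=
          Finset.prod_le_one (fun i _ => by linarith [hg1' i]) (fun i _ => by linarith [hg0 i])
        nlinarith [hP n, hP J]
      linarith [hP J]
    · have hsplit : (∏ i ∈ Finset.range J, (1 - g i)) * ∏ i ∈ Finset.Ico J n, (1 - g i)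
          = ∏ i ∈ Finset.range n, (1 - g i) := by
        rw [Finset.range_eq_Ico, Finset.range_eq_Ico]
        exact Finset.prod_Ico_consecutive _ (Nat.zero_le J) h.le
      have hsum : ∑ i ∈ Finset.Ico J n, g i ≤ 1/2 := by
        have e1 : Finset.Ico J n
            = Finset.map ⟨fun i => i + J, add_left_injective J⟩
              (Finset.range (n - J)) := by
          ext x
          simp only [Finset.mem_Ico, Finset.mem_map, Finset.mem_range,
            Function.Embedding.coeFn_mk]
          constructor
          · intro ⟨h1, h2⟩; exact ⟨x - J, by omega, by omega⟩
          · rintro ⟨y, hy, rfl⟩; omega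
        have e2 : ∑ i ∈ Finset.Ico J n, g i ≤ ∑' i : ℕ, ‖q‖ ^ (J + 1) * ‖q‖ ^ i := by
          rw [e1, Finset.sum_map]
          have e3 : ∀ i ∈ Finset.range (n - J), g (i + J) ≤ ‖q‖ ^ (J+1) * ‖q‖ ^ i := by
            intro i _
            simp only [hg]
            rw [← pow_add]
            apply pow_le_pow_of_le_one hq0 hq.le (by omega)
          calc ∑ i ∈ Finset.range (n-J), g (i + J)
              ≤ ∑ i ∈ Finset.range (n-J), ‖q‖ ^ (J+1) * ‖q‖ ^ i := Finset.sum_le_sum e3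
            _ ≤ ∑' i : ℕ, ‖q‖ ^ (J + 1) * ‖q‖ ^ i := by
                apply Summable.sum_le_tsum _ (fun i _ => by positivity)
                exact (summable_geometric_of_lt_one hq0 hq).mul_left _
        rw [tsum_mul_left, tsum_geometric_of_lt_one hq0 hq] at e2
        have h3 : (0:ℝ) < 1 - ‖q‖ := by linarith
        have h4 : ‖q‖ ^ (J + 1) ≤ (1 - ‖q‖) / 2 := by
          calc ‖q‖ ^ (J+1) ≤ ‖q‖ ^ J := pow_le_pow_of_le_one hq0 hq.le (by omega)
            _ ≤ (1 - ‖q‖)/2 := hJ.le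
        have h5 : ‖q‖ ^ (J+1) * (1 - ‖q‖)⁻¹ ≤ ((1 - ‖q‖)/2) * (1 - ‖q‖)⁻¹ := by
          gcongr
        have h6 : ((1 - ‖q‖)/2) * (1 - ‖q‖)⁻¹ = 1/2 := by
          rw [div_mul_eq_mul_div, mul_inv_cancel₀ h3.ne']
        linarith
      have := prod_one_sub_ge (Finset.Ico J n) g hg0 hg1'
      nlinarith [hP J]
  refine le_trans key ?_
  rw [qPoch, norm_prod]
  apply Finset.prod_le_prod (fun i _ => by linarith [hg1' i])
  intro i _
  have h1 := norm_sub_norm_le (1:ℂ) (q * q ^ i)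
  have h2 : ‖q * q ^ i‖ = g i := by
    simp only [norm_mul, norm_pow, hg]
    ring
  rw [h2] at h1
  simpa using h1

noncomputable def eulS (q z : ℂ) : ℂ := ∑' j : ℕ, z ^ j / qPoch q q j

lemma summable_eulS (hq : ‖q‖ < 1) {z : ℂ} (hz : ‖z‖ < 1) :
    Summable (fun j : ℕ => z ^ j / qPoch q q j) := by
  obtain ⟨c, hc, hb⟩ := exists_lb hq
  apply Summable.of_norm_bounded (g := fun j => ‖z‖ ^ j / c)
  · exact (summable_geometric_of_lt_one (norm_nonneg z) hz).div_const c
  · intro j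
    rw [norm_div, norm_pow]
    exact div_le_div_of_nonneg_left (by positivity) hc (hb j)

lemma qPoch_succ (a : ℂ) (n : ℕ) :
    qPoch a q (n + 1) = qPoch a q n * (1 - a * q ^ n) := Finset.prod_range_succ _ _

lemma qPoch_q_succ (hq : ‖q‖ < 1) (j : ℕ) :
    qPoch q q (j + 1) = qPoch q q j * (1 - q ^ (j + 1)) := by
  rw [qPoch, Finset.prod_range_succ, ← qPoch, pow_succ']

set_option maxHeartbeats 1000000 in
lemma eulS_funEq (hq : ‖q‖ < 1) {z : ℂ} (hz : ‖z‖ < 1) :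
    eulS q (q * z) = (1 - z) * eulS q z := by
  have hq1 : qPoch q q 0 = 1 := by simp [qPoch]
  have hqz : ‖q * z‖ < 1 := by
    rw [norm_mul]
    nlinarith [norm_nonneg q, norm_nonneg z]
  have h1 : Summable fun j : ℕ => z ^ j / qPoch q q j := summable_eulS hq hz
  have h1' : Summable fun j : ℕ => (q*z) ^ j / qPoch q q j := summable_eulS hq hqz
  have h2 : Summable fun j : ℕ => z ^ (j+1) / qPoch q q (j+1) :=
    (summable_nat_add_iff (f := fun j : ℕ => z ^ j / qPoch q q j) 1).2 h1
  have h2' : Summable fun j : ℕ => (q*z) ^ (j+1) / qPoch q q (j+1) :=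
    (summable_nat_add_iff (f := fun j : ℕ => (q*z) ^ j / qPoch q q j) 1).2 h1'
  have h3 : Summable fun j : ℕ => z ^ (j+1) / qPoch q q j := by
    have := h1.mul_left z
    apply this.congr
    intro j
    rw [pow_succ', mul_div_assoc]
  have key : ∀ j : ℕ, (q*z) ^ (j+1) / qPoch q q (j+1)
      = z ^ (j+1) / qPoch q q (j+1) - z ^ (j+1) / qPoch q q j := by
    intro j
    have hne : qPoch q q j ≠ 0 := qPoch_ne_zero hq hq.le j
    have hfe : (1 : ℂ) - q ^ (j+1) ≠ 0 := by
      have := factor_ne hq hq.le j (q := q)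
      rwa [← pow_succ'] at this
    rw [qPoch_q_succ hq]
    field_simp
    ring
  calc eulS q (q * z)
      = (q*z) ^ 0 / qPoch q q 0 + ∑' j : ℕ, (q*z) ^ (j+1) / qPoch q q (j+1) := by
        rw [eulS]; exact Summable.tsum_eq_zero_add h1'
    _ = 1 + ∑' j : ℕ, (z ^ (j+1) / qPoch q q (j+1) - z ^ (j+1) / qPoch q q j) := by
        rw [hq1]
        simp only [pow_zero]
        rw [tsum_congr key]
        norm_num
    _ = 1 + ((∑' j : ℕ, z ^ (j+1) / qPoch q q (j+1)) - ∑' j : ℕ, z ^ (j+1) / qPoch q q j) := by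
        rw [Summable.tsum_sub h2 h3]
    _ = 1 + ((eulS q z - 1) - z * eulS q z) := by
        congr 1
        congr 1
        · have := Summable.tsum_eq_zero_add h1
          rw [eulS, this, hq1]
          simp
        · rw [eulS, ← tsum_mul_left]
          apply tsum_congr
          intro j
          rw [pow_succ', mul_div_assoc]
    _ = (1 - z) * eulS q z := by ring

lemma eulS_iter (hq : ‖q‖ < 1) {z : ℂ} (hz : ‖z‖ < 1) (N : ℕ) :
    eulS q (q ^ N * z) = qPoch z q N * eulS q z := by
  induction N with
  | zero => simp [qPoch]
  | succ N ih =>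
    have hzN : ‖q ^ N * z‖ < 1 := by
      rw [norm_mul, norm_pow]
      calc ‖q‖ ^ N * ‖z‖ ≤ 1 * ‖z‖ := by
            apply mul_le_mul_of_nonneg_right (pow_le_one₀ (norm_nonneg q) hq.le) (norm_nonneg z)
        _ < 1 := by simpa using hz
    have : q ^ (N+1) * z = q * (q ^ N * z) := by ring
    rw [this, eulS_funEq hq hzN, ih, qPoch_succ]
    ring

lemma eulS_tendsto_one (hq : ‖q‖ < 1) {z : ℂ} (hz : ‖z‖ < 1) :
    Filter.Tendsto (fun N : ℕ => eulS q (q ^ N * z)) Filter.atTop (nhds 1) := by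
  obtain ⟨c, hc, hb⟩ := exists_lb hq
  have bound : ∀ w : ℂ, ‖w‖ ≤ ‖z‖ → ‖eulS q w - 1‖ ≤ ‖w‖ * ((1 - ‖z‖)⁻¹ / c) := by
    intro w hw
    have hw1 : ‖w‖ < 1 := lt_of_le_of_lt hw hz
    have h1 := summable_eulS hq hw1
    have h2 : Summable fun j : ℕ => w ^ (j+1) / qPoch q q (j+1) :=
      (summable_nat_add_iff (f := fun j : ℕ => w ^ j / qPoch q q j) 1).2 h1
    have e0 : eulS q w - 1 = ∑' j : ℕ, w ^ (j+1) / qPoch q q (j+1) := by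
      rw [eulS, Summable.tsum_eq_zero_add h1]
      simp [qPoch]
    rw [e0]
    have hpt : ∀ j : ℕ, ‖w ^ (j+1) / qPoch q q (j+1)‖ ≤ ‖w‖ * ‖z‖ ^ j / c := by
      intro j
      rw [norm_div, norm_pow]
      have e1 : ‖w‖ ^ (j+1) ≤ ‖w‖ * ‖z‖ ^ j := by
        rw [pow_succ']
        exact mul_le_mul_of_nonneg_left (pow_le_pow_left₀ (norm_nonneg w) hw j) (norm_nonneg w)
      calc ‖w‖ ^ (j+1) / ‖qPoch q q (j+1)‖ ≤ ‖w‖ ^ (j+1) / c :=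
            div_le_div_of_nonneg_left (by positivity) hc (hb (j+1))
        _ ≤ ‖w‖ * ‖z‖ ^ j / c := by gcongr
    have hsum2 : Summable fun j : ℕ => ‖w‖ * ‖z‖ ^ j / c :=
      (((summable_geometric_of_lt_one (norm_nonneg z) hz).mul_left ‖w‖).div_const c)
    calc ‖∑' j : ℕ, w ^ (j+1) / qPoch q q (j+1)‖
        ≤ ∑' j : ℕ, ‖w ^ (j+1) / qPoch q q (j+1)‖ := norm_tsum_le_tsum_norm h2.norm
      _ ≤ ∑' j : ℕ, ‖w‖ * ‖z‖ ^ j / c := Summable.tsum_le_tsum hpt h2.norm hsum2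
      _ = ‖w‖ * ((1 - ‖z‖)⁻¹ / c) := by
          rw [tsum_congr (fun j : ℕ => show ‖w‖ * ‖z‖ ^ j / c = (‖w‖/c) * ‖z‖ ^ j by ring),
            tsum_mul_left, tsum_geometric_of_lt_one (norm_nonneg z) hz]
          ring
  have hsq : Filter.Tendsto (fun N : ℕ => eulS q (q ^ N * z) - 1) Filter.atTop (nhds 0) := by
    refine squeeze_zero_norm (a := fun N : ℕ => (‖z‖ * ((1 - ‖z‖)⁻¹ / c)) * ‖q‖ ^ N) ?_ ?_
    · intro N
      have hwz : ‖q ^ N * z‖ ≤ ‖z‖ := by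
        rw [norm_mul, norm_pow]
        calc ‖q‖ ^ N * ‖z‖ ≤ 1 * ‖z‖ :=
              mul_le_mul_of_nonneg_right (pow_le_one₀ (norm_nonneg q) hq.le) (norm_nonneg z)
          _ = ‖z‖ := one_mul _
      calc ‖eulS q (q ^ N * z) - 1‖ ≤ ‖q ^ N * z‖ * ((1 - ‖z‖)⁻¹ / c) := bound _ hwz
        _ = (‖z‖ * ((1 - ‖z‖)⁻¹ / c)) * ‖q‖ ^ N := by rw [norm_mul, norm_pow]; ring
    · simpa using (tendsto_pow_atTop_nhds_zero_of_lt_one (norm_nonneg q) hq).const_mul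
        (‖z‖ * ((1 - ‖z‖)⁻¹ / c))
  have := hsq.add_const 1
  simpa using this

lemma multipliable_poch (hq : ‖q‖ < 1) {a : ℂ} (ha : ‖a‖ < 1) :
    Multipliable (fun j : ℕ => 1 - a * q ^ j) := by
  have hlog : Summable fun n : ℕ => Complex.log (1 - a * q ^ n) := by
    apply Summable.of_norm_bounded_eventually_nat (g := fun n => 3/2 * (‖a‖ * ‖q‖ ^ n))
    · exact ((summable_geometric_of_lt_one (norm_nonneg q) hq).mul_left _).mul_left _
    · have htend : Filter.Tendsto (fun n : ℕ => ‖a‖ * ‖q‖ ^ n) Filter.atTop (nhds 0) := by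
        simpa using (tendsto_pow_atTop_nhds_zero_of_lt_one (norm_nonneg q) hq).const_mul ‖a‖
      filter_upwards [htend.eventually_lt_const (show (0:ℝ) < 1/2 by norm_num)] with n hn
      have e1 : (1:ℂ) - a * q ^ n = 1 + (-(a * q ^ n)) := by ring
      rw [e1]
      have hb := Complex.norm_log_one_add_half_le_self (z := -(a * q ^ n))
        (by rw [norm_neg, norm_mul, norm_pow]; linarith)
      calc ‖Complex.log (1 + -(a * q ^ n))‖ ≤ 3/2 * ‖-(a * q ^ n)‖ := hb
        _ = 3/2 * (‖a‖ * ‖q‖ ^ n) := by rw [norm_neg, norm_mul, norm_pow]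
  exact Complex.multipliable_of_summable_log hlog

lemma euler (hq : ‖q‖ < 1) {z : ℂ} (hz : ‖z‖ < 1) : eulS q z * qPochInf z q = 1 := by
  have hm := multipliable_poch hq hz
  have h1 : Filter.Tendsto (fun N : ℕ => qPoch z q N) Filter.atTop (nhds (qPochInf z q)) :=
    hm.hasProd.tendsto_prod_nat
  have h2 := h1.mul_const (eulS q z)
  have h3 : (fun N : ℕ => qPoch z q N * eulS q z) = fun N : ℕ => eulS q (q ^ N * z) :=
    funext fun N => (eulS_iter hq hz N).symm
  rw [h3] at h2
  have := tendsto_nhds_unique h2 (eulS_tendsto_one hq hz)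
  rw [mul_comm]
  exact this

lemma qPochInf_ne_zero (hq : ‖q‖ < 1) {z : ℂ} (hz : ‖z‖ < 1) : qPochInf z q ≠ 0 := by
  intro h0
  have h := euler hq hz
  rw [h0, mul_zero] at h
  exact one_ne_zero h.symm

lemma eulS_eq (hq : ‖q‖ < 1) {z : ℂ} (hz : ‖z‖ < 1) : eulS q z = (qPochInf z q)⁻¹ := by
  have h := euler hq hz
  have hne := qPochInf_ne_zero hq hz
  field_simp
  exact h

lemma norm_pow_mul_lt (hq : ‖q‖ < 1) {z : ℂ} (hz : ‖z‖ < 1) (N : ℕ) : ‖q ^ N * z‖ < 1 := by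
  rw [norm_mul, norm_pow]
  calc ‖q‖ ^ N * ‖z‖ ≤ 1 * ‖z‖ :=
        mul_le_mul_of_nonneg_right (pow_le_one₀ (norm_nonneg q) hq.le) (norm_nonneg z)
    _ = ‖z‖ := one_mul _
    _ < 1 := hz

lemma qPochInf_split (hq : ‖q‖ < 1) {z : ℂ} (hz : ‖z‖ < 1) (N : ℕ) :
    qPochInf z q = qPoch z q N * qPochInf (q ^ N * z) q := by
  have hw : ‖q ^ N * z‖ < 1 := norm_pow_mul_lt hq hz N
  have h1 := eulS_iter hq hz N
  rw [eulS_eq hq hz, eulS_eq hq hw] at h1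
  have hz0 := qPochInf_ne_zero hq hz
  have hw0 := qPochInf_ne_zero hq hw
  field_simp at h1
  linear_combination h1

end QAux

open QAux in
theorem stmt_4 (q : ℂ) (hq : ‖q‖ < 1) (hq0 : q ≠ 0) (m k : ℕ) (hm : 1 ≤ m) (hk : m ≤ k) :
    (∑' j : ℕ, ∑ l ∈ Finset.Icc 1 k,
        q ^ ((m - 1) * (k + 1 + j - l) + k + l * j) /
            (qPoch q q j * qPoch q q (m - 1)) * qBinom q ((k : ℤ) - 1) ((l : ℤ) - 1)) =
      (q ^ (k * m) / qPochInf (q ^ k) q) *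
        ∑ l ∈ Finset.Icc 1 k,
          q ^ (-(((l : ℤ) - 1) * ((m : ℤ) - 1))) * qPoch (q ^ m) q (l - 1) /
            (qPoch q q (l - 1) * qPoch q q (k - l)) := by
  have hwl : ∀ n : ℕ, 1 ≤ n → ‖q ^ n‖ < 1 := by
    intro n hn
    rw [norm_pow]
    calc ‖q‖ ^ n ≤ ‖q‖ ^ 1 := pow_le_pow_of_le_one (norm_nonneg q) hq.le hn
      _ = ‖q‖ := pow_one _
      _ < 1 := hq
  have hP0 : ∀ n : ℕ, qPoch q q n ≠ 0 := qPoch_ne_zero hq hq.le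
  -- Step A : rewrite inner summand
  have hA : ∀ j : ℕ, ∀ l ∈ Finset.Icc 1 k,
      q ^ ((m - 1) * (k + 1 + j - l) + k + l * j) /
          (qPoch q q j * qPoch q q (m - 1)) * qBinom q ((k : ℤ) - 1) ((l : ℤ) - 1)
        = (q ^ ((m-1)*(k+1-l)+k) / qPoch q q (m - 1) * qBinom q ((k : ℤ) - 1) ((l : ℤ) - 1))
            * ((q ^ (m-1+l)) ^ j / qPoch q q j) := by
    intro j l hl
    rw [Finset.mem_Icc] at hl
    have he : (m - 1) * (k + 1 + j - l) + k + l * j = ((m-1)*(k+1-l)+k) + (m-1+l)*j := by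
      rw [show k + 1 + j - l = (k + 1 - l) + j from by omega]
      ring
    rw [he, pow_add, pow_mul]
    ring
  rw [tsum_congr (fun j => Finset.sum_congr rfl (hA j))]
  rw [Summable.tsum_finsetSum (fun l hl => by
    refine Summable.mul_left _ ?_
    have hl' := Finset.mem_Icc.mp hl
    exact summable_eulS hq (hwl (m-1+l) (by omega)))]
  rw [Finset.mul_sum]
  apply Finset.sum_congr rfl
  intro l hl
  rw [Finset.mem_Icc] at hl
  obtain ⟨hl1, hlk⟩ := hl
  rw [tsum_mul_left]
  have hwml : ‖q ^ (m-1+l)‖ < 1 := hwl _ (by omega)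
  have hwk : ‖q ^ k‖ < 1 := hwl _ (by omega)
  have hEul : (∑' j : ℕ, (q ^ (m-1+l)) ^ j / qPoch q q j) = (qPochInf (q ^ (m-1+l)) q)⁻¹ :=
    eulS_eq hq hwml
  have hIq : qPochInf q q ≠ 0 := qPochInf_ne_zero hq hq
  have hIml : qPochInf (q ^ (m-1+l)) q ≠ 0 := qPochInf_ne_zero hq hwml
  have hIk : qPochInf (q ^ k) q ≠ 0 := qPochInf_ne_zero hq hwk
  have hsplit1 : qPochInf q q = qPoch q q (m+l-2) * qPochInf (q ^ (m-1+l)) q := by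
    have h := qPochInf_split hq hq (m+l-2)
    rwa [show q ^ (m+l-2) * q = q ^ (m-1+l) from by
      rw [← pow_succ]; congr 1; omega] at h
  have hsplit2 : qPochInf q q = qPoch q q (k-1) * qPochInf (q ^ k) q := by
    have h := qPochInf_split hq hq (k-1)
    rwa [show q ^ (k-1) * q = q ^ k from by
      rw [← pow_succ]; congr 1; omega] at h
  have hpochsplit : qPoch q q (m+l-2) = qPoch q q (m-1) * qPoch (q ^ m) q (l-1) := by
    rw [show m+l-2 = (m-1)+(l-1) from by omega]
    simp only [qPoch]
    rw [Finset.prod_range_add]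
    congr 1
    apply Finset.prod_congr rfl
    intro i _
    congr 1
    rw [pow_add, show q * (q ^ (m-1) * q ^ i) = (q * q ^ (m-1)) * q ^ i from by ring,
      ← pow_succ', show m - 1 + 1 = m from by omega]
  have hbin : qBinom q ((k : ℤ) - 1) ((l : ℤ) - 1)
      = qPoch q q (k-1) / (qPoch q q (l-1) * qPoch q q (k-l)) := by
    rw [qBinom, if_pos ⟨by omega, by omega⟩]
    have e1 : ((k : ℤ) - 1).toNat = k - 1 := by omega
    have e2 : ((l : ℤ) - 1).toNat = l - 1 := by omega
    have e3 : ((k : ℤ) - 1 - ((l : ℤ) - 1)).toNat = k - l := by omega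
    rw [e1, e2, e3]
  have hpow : (q : ℂ) ^ ((m-1)*(k+1-l)+k)
      = q ^ (k * m) * q ^ (-(((l : ℤ) - 1) * ((m : ℤ) - 1))) := by
    rw [← zpow_natCast q (k*m), ← zpow_natCast q ((m-1)*(k+1-l)+k), ← zpow_add₀ hq0]
    congr 1
    push_cast [Nat.cast_sub (show l ≤ k + 1 from by omega), Nat.cast_sub hm]
    ring
  have e1 : qPochInf (q ^ (m-1+l)) q = qPochInf q q / qPoch q q (m+l-2) := by
    rw [eq_div_iff (hP0 _)]
    linear_combination -hsplit1
  have e2 : qPochInf (q ^ k) q = qPochInf q q / qPoch q q (k-1) := by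
    rw [eq_div_iff (hP0 _)]
    linear_combination -hsplit2
  set Z : ℂ := q ^ (-(((l : ℤ) - 1) * ((m : ℤ) - 1))) with hZdef
  have hZ : Z ≠ 0 := zpow_ne_zero _ hq0
  rw [hEul, e1, hbin, hpow, e2, hpochsplit]
  have hc : qPoch q q (m-1) * (qPoch q q (m-1))⁻¹ = 1 := mul_inv_cancel₀ (hP0 _)
  field_simp
  linear_combination (qPoch q q (k - 1) * qPoch (q ^ m) q (l - 1) *
    (qPoch q q (l - 1))⁻¹ * (qPoch q q (k - l))⁻¹) * hc
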